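/- Let X be a Hausdorff locally convex space and K a weakly compact circled convex subset of X with K° ≠ X*. Then the function f := σ_{K°} (the support function of the polar of K) satisfies: f − x* attains its minimum on X (at 0) for every x* in the strict polar K°_s = {x* : σ_K(x*) < 1}, while f* = δ_{K°}, so the domain of the subdifferential of f* is contained in K° and hence is not all of X*. -/

import Mathlib

open Topology Set Pointwise Bornology

noncomputable section

section Defs

variable {X : Type*} [AddCommGroup X] [Module ℝ X] [TopologicalSpace X]

/-- Fenchel conjugate of an extended-real-valued function `f : X → ℝ ∪ {+∞}`. -/
def conjugate (f : X → EReal) (φ : X →L[ℝ] ℝ) : EReal := ⨆ x : X, (φ x : EReal) - f x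

/-- Moreau–Rockafellar subdifferential of `f : X → ℝ ∪ {+∞}` at `x`. -/
def subdiff (f : X → EReal) (x : X) : Set (X →L[ℝ] ℝ) :=
  {φ | ∀ y : X, ((φ (y - x) : ℝ) : EReal) + f x ≤ f y}

/-- A set `A ⊆ X` is weakly compact (compact for the weak topology `σ(X, X*)`). -/
def WeaklyCompact (A : Set X) : Prop := IsCompact (toWeakSpace ℝ X '' A)

/-- A set `A ⊆ X` is relatively weakly compact. -/
def RelWeaklyCompact (A : Set X) : Prop := IsCompact (closure (toWeakSpace ℝ X '' A))

/-- The directional asymptotic cone of a set of continuous linear functionals. -/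
def asympCone (A : Set (X →L[ℝ] ℝ)) : Set (X →L[ℝ] ℝ) :=
  {y | ∃ x ∈ A, ∀ l : ℝ, 0 ≤ l → x + l • y ∈ A}

/-- The class `ℰ(K)` of functions `φ : X → ℝ ∪ {+∞}` from Definition 3.1. -/
def EClass (K : Set (X →L[ℝ] ℝ)) : Set (X → EReal) :=
  {φ | (∀ ψ : X →L[ℝ] ℝ, conjugate φ ψ ≠ ⊥) ∧ conjugate φ 0 = 0 ∧
    asympCone K ⊆ {ψ | conjugate φ ψ ≠ ⊤} ∧ {ψ | conjugate φ ψ ≠ ⊤} ⊆ K ∧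
    (∀ ψ ∈ K \ asympCone K,
      sSup {v : EReal | ∃ η : ℝ, 0 < η ∧ conjugate φ (η • ψ) ≠ ⊤ ∧ v = conjugate φ (η • ψ)} = ⊤) ∧
    (∀ ψ : X →L[ℝ] ℝ, conjugate φ ψ ≠ ⊤ → ∃ x : X, ψ ∈ subdiff φ x)}

/-- Polar of a subset of `X`. -/
def pol (K : Set X) : Set (X →L[ℝ] ℝ) := {φ | ∀ x ∈ K, φ x ≤ 1}

/-- Support function of a subset of `X`. -/
def supportFn (A : Set X) (φ : X →L[ℝ] ℝ) : EReal := sSup ((fun x => ((φ x : ℝ) : EReal)) '' A)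

/-- A set is open for the Mackey topology `τ(X*,X)`: around each of its points it contains a
translate of the polar of some weakly compact balanced (circled) convex subset of `X`. -/
def MackeyOpen (U : Set (X →L[ℝ] ℝ)) : Prop :=
  ∀ φ ∈ U, ∃ K : Set X, WeaklyCompact K ∧ Balanced ℝ K ∧ Convex ℝ K ∧
    {ψ : X →L[ℝ] ℝ | ∀ x ∈ K, (ψ - φ) x ≤ 1} ⊆ U

/-- `F : X* → ℝ ∪ {±∞}` is continuous at `φ` for the Mackey topology `τ(X*,X)`. -/
def MackeyContinuousAt (F : (X →L[ℝ] ℝ) → EReal) (φ : X →L[ℝ] ℝ) : Prop :=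
  ∀ V ∈ 𝓝 (F φ), ∃ K : Set X, WeaklyCompact K ∧ Balanced ℝ K ∧ Convex ℝ K ∧
    ∀ ψ : X →L[ℝ] ℝ, (∀ x ∈ K, (ψ - φ) x ≤ 1) → F ψ ∈ V

/-- `f` is epi-pointed: `f*` is proper and `τ(X*,X)`-continuous at some point of its domain. -/
def EpiPointed (f : X → EReal) : Prop :=
  (∃ ψ : X →L[ℝ] ℝ, conjugate f ψ ≠ ⊤) ∧ (∀ ψ : X →L[ℝ] ℝ, conjugate f ψ ≠ ⊥) ∧
  ∃ φ : X →L[ℝ] ℝ, conjugate f φ ≠ ⊤ ∧ MackeyContinuousAt (conjugate f) φ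

/-- Relative compactness in `X × ℝ` for the product of the weak topology `σ(X, X*)` on `X`
with the usual topology on `ℝ`. -/
def RelWeaklyCompactProd (A : Set (X × ℝ)) : Prop :=
  IsCompact (closure ((fun p : X × ℝ => ((toWeakSpace ℝ X p.1 : WeakSpace ℝ X), p.2)) '' A))

/-- Epigraph of `f : X → ℝ ∪ {+∞}` (as a subset of `X × ℝ`). -/
def Epigr (f : X → EReal) : Set (X × ℝ) := {p | f p.1 ≤ (p.2 : EReal)}

/-- Inf-convolution of two extended-real-valued functions. -/
def infConv (f g : X → EReal) (x : X) : EReal := ⨅ z : X, f z + g (x - z)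

/-- Convexity for extended-real-valued functions. -/
def EConvex (f : X → EReal) : Prop :=
  ∀ x y : X, ∀ a b : ℝ, 0 ≤ a → 0 ≤ b → a + b = 1 →
    f (a • x + b • y) ≤ (a : EReal) * f x + (b : EReal) * f y

/-- The algebraic interior of a set of continuous linear functionals. -/
def algInt (A : Set (X →L[ℝ] ℝ)) : Set (X →L[ℝ] ℝ) :=
  {a ∈ A | ∀ ψ : X →L[ℝ] ℝ, ∃ δ > (0:ℝ), ∀ l ∈ Set.Icc (0:ℝ) δ, a + l • ψ ∈ A}

/-- Subdifferential of a real-valued function on `X*`, with respect to the pairing with `X`. -/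
def subdiffStar (g : (X →L[ℝ] ℝ) → ℝ) (φ : X →L[ℝ] ℝ) : Set X :=
  {x | ∀ ψ : X →L[ℝ] ℝ, (ψ - φ) x + g φ ≤ g ψ}

end Defs

section Defs2

variable {X : Type*} [AddCommGroup X] [Module ℝ X] [TopologicalSpace X]

/-- Support function (on `X`) of a set of continuous linear functionals. -/
def supportFnStar (A : Set (X →L[ℝ] ℝ)) (x : X) : EReal :=
  sSup ((fun ψ : X →L[ℝ] ℝ => ((ψ x : ℝ) : EReal)) '' A)

/-- Subdifferential of an extended-real-valued function on `X*`, w.r.t. the pairing with `X`. -/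
def subdiffStarE (F : (X →L[ℝ] ℝ) → EReal) (φ : X →L[ℝ] ℝ) : Set X :=
  {x | ∀ ψ : X →L[ℝ] ℝ, (((ψ - φ) x : ℝ) : EReal) + F φ ≤ F ψ}

end Defs2

/-!
Everything follows from the positive homogeneity of `f = σ_{K°}`. Each `φ ∈ K°` is a linear
minorant of `f` with `f 0 = 0 = φ 0`, which gives both the minimality of `f - φ` at `0` and
`f* φ = 0`. If `φ ∉ K°`, pick `x ∈ K` with `φ x > 1`; since `f (t • x) ≤ t`, the differences
`φ (t • x) - f (t • x) ≥ t (φ x - 1)` are unbounded, so `f* φ = ⊤`. Finally, a point where `f*`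
is infinite has empty subdifferential as soon as `f*` is finite somewhere (at `0`, say).
-/

section SupportFunction

variable {X : Type*} [AddCommGroup X] [Module ℝ X] [TopologicalSpace X]

lemma zero_mem_pol (K : Set X) : (0 : X →L[ℝ] ℝ) ∈ pol K := fun _ _ => zero_le_one

lemma mem_pol_of_supportFn_le_one {K : Set X} {φ : X →L[ℝ] ℝ} (h : supportFn K φ ≤ 1) :
    φ ∈ pol K := fun _ hx =>
  EReal.coe_le_coe_iff.1 <| (le_sSup (mem_image_of_mem _ hx)).trans h

lemma apply_le_supportFnStar {A : Set (X →L[ℝ] ℝ)} {φ : X →L[ℝ] ℝ} (hφ : φ ∈ A) (x : X) :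
    ((φ x : ℝ) : EReal) ≤ supportFnStar A x :=
  le_sSup (mem_image_of_mem _ hφ)

lemma supportFnStar_zero {A : Set (X →L[ℝ] ℝ)} (hA : A.Nonempty) : supportFnStar A 0 = 0 := by
  obtain ⟨φ, hφ⟩ := hA
  refine le_antisymm (sSup_le ?_) (by simpa using apply_le_supportFnStar hφ 0)
  rintro _ ⟨ψ, -, rfl⟩
  simp

lemma supportFnStar_pol_smul_le {K : Set X} {x : X} (hx : x ∈ K) {t : ℝ} (ht : 0 ≤ t) :
    supportFnStar (pol K) (t • x) ≤ t := by
  refine sSup_le ?_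
  rintro _ ⟨ψ, hψ, rfl⟩
  rw [EReal.coe_le_coe_iff, map_smul, smul_eq_mul]
  simpa using mul_le_mul_of_nonneg_left (hψ x hx) ht

lemma supportFnStar_sub_apply_zero_le {A : Set (X →L[ℝ] ℝ)} {φ : X →L[ℝ] ℝ} (hφ : φ ∈ A)
    (x : X) : supportFnStar A 0 - φ 0 ≤ supportFnStar A x - φ x := by
  rw [supportFnStar_zero ⟨φ, hφ⟩, map_zero, EReal.coe_zero, sub_zero]
  calc (0 : EReal) = ((φ x - φ x : ℝ) : EReal) := by rw [sub_self, EReal.coe_zero]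
    _ ≤ supportFnStar A x - φ x := by
      rw [EReal.coe_sub]
      exact EReal.sub_le_sub (apply_le_supportFnStar hφ x) le_rfl

lemma sub_le_conjugate (f : X → EReal) (φ : X →L[ℝ] ℝ) (x : X) :
    ((φ x : ℝ) : EReal) - f x ≤ conjugate f φ :=
  le_iSup (fun y => ((φ y : ℝ) : EReal) - f y) x

lemma conjugate_supportFnStar_of_mem {A : Set (X →L[ℝ] ℝ)} {φ : X →L[ℝ] ℝ} (hφ : φ ∈ A) :
    conjugate (supportFnStar A) φ = 0 := by
  refine le_antisymm (iSup_le fun x => ?_) ?_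
  · calc ((φ x : ℝ) : EReal) - supportFnStar A x ≤ ((φ x - φ x : ℝ) : EReal) := by
          rw [EReal.coe_sub]
          exact EReal.sub_le_sub le_rfl (apply_le_supportFnStar hφ x)
      _ = 0 := by rw [sub_self, EReal.coe_zero]
  · simpa [supportFnStar_zero ⟨φ, hφ⟩] using sub_le_conjugate (supportFnStar A) φ 0

lemma conjugate_supportFnStar_pol_of_notMem {K : Set X} {φ : X →L[ℝ] ℝ} (hφ : φ ∉ pol K) :
    conjugate (supportFnStar (pol K)) φ = ⊤ := by
  obtain ⟨x, hx, hφx⟩ : ∃ x ∈ K, 1 < φ x := by simpa [pol] using hφ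
  refine (EReal.eq_top_iff_forall_lt _).2 fun r => ?_
  set t := (|r| + 1) / (φ x - 1)
  have ht : 0 ≤ t := div_nonneg (by positivity) (by linarith)
  have hrt : r < t * φ x - t := by
    have : t * (φ x - 1) = |r| + 1 := div_mul_cancel₀ _ (by linarith)
    linarith [le_abs_self r]
  calc (r : EReal) < ((t * φ x - t : ℝ) : EReal) := EReal.coe_lt_coe_iff.2 hrt
    _ ≤ ((φ (t • x) : ℝ) : EReal) - supportFnStar (pol K) (t • x) := by
      rw [EReal.coe_sub, map_smul, smul_eq_mul]
      exact EReal.sub_le_sub le_rfl (supportFnStar_pol_smul_le hx ht)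
    _ ≤ _ := sub_le_conjugate _ φ (t • x)

open Classical in
lemma conjugate_supportFnStar_pol (K : Set X) (φ : X →L[ℝ] ℝ) :
    conjugate (supportFnStar (pol K)) φ = if φ ∈ pol K then (0 : EReal) else ⊤ := by
  split_ifs with hφ
  · exact conjugate_supportFnStar_of_mem hφ
  · exact conjugate_supportFnStar_pol_of_notMem hφ

lemma ne_top_of_subdiffStarE_nonempty {F : (X →L[ℝ] ℝ) → EReal} {φ ψ : X →L[ℝ] ℝ}
    (hφ : (subdiffStarE F φ).Nonempty) (hψ : F ψ ≠ ⊤) : F φ ≠ ⊤ := by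
  obtain ⟨x, hx⟩ := hφ
  intro htop
  have := hx ψ
  rw [htop, EReal.coe_add_top, top_le_iff] at this
  exact hψ this

lemma setOf_subdiffStarE_conjugate_supportFnStar_pol_nonempty_subset (K : Set X) :
    {φ : X →L[ℝ] ℝ | (subdiffStarE (conjugate (supportFnStar (pol K))) φ).Nonempty} ⊆
      pol K := by
  intro φ hφ
  by_contra hφK
  refine ne_top_of_subdiffStarE_nonempty (ψ := 0) hφ ?_
    (conjugate_supportFnStar_pol_of_notMem hφK)
  rw [conjugate_supportFnStar_of_mem (zero_mem_pol K)]
  exact EReal.zero_ne_top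

end SupportFunction

variable {X : Type*} [AddCommGroup X] [Module ℝ X] [TopologicalSpace X]
  [IsTopologicalAddGroup X] [ContinuousSMul ℝ X] [LocallyConvexSpace ℝ X] [T2Space X]

open Classical in
theorem supportFn_polar_attainsMin_and_domSubdiff_small_general
    (K : Set X)
    (hprop : pol K ≠ Set.univ) :
    (∀ φ : X →L[ℝ] ℝ, supportFn K φ < 1 →
      ∀ x : X, supportFnStar (pol K) 0 - φ 0 ≤ supportFnStar (pol K) x - φ x) ∧
    (∀ φ : X →L[ℝ] ℝ, conjugate (supportFnStar (pol K)) φ =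
      if φ ∈ pol K then (0 : EReal) else ⊤) ∧
    {φ : X →L[ℝ] ℝ | (subdiffStarE (conjugate (supportFnStar (pol K))) φ).Nonempty} ⊆ pol K ∧
    {φ : X →L[ℝ] ℝ | (subdiffStarE (conjugate (supportFnStar (pol K))) φ).Nonempty} ≠
      Set.univ := by
  have hdom := setOf_subdiffStarE_conjugate_supportFnStar_pol_nonempty_subset K
  exact ⟨fun φ hφ => supportFnStar_sub_apply_zero_le (mem_pol_of_supportFn_le_one hφ.le),
    conjugate_supportFnStar_pol K, hdom, fun h => hprop (eq_univ_of_univ_subset (h ▸ hdom))⟩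

open Classical in
/-- For a weakly compact circled convex `K` with `K° ≠ X*`, the function `f = σ_{K°}` has
`f - x*` attaining its minimum at `0` for every `x*` in the strict polar of `K`, `f* = δ_{K°}`,
and the domain of `∂f*` is contained in `K°`, hence is not all of `X*`. -/
theorem supportFn_polar_attainsMin_and_domSubdiff_small
    (K : Set X) (hK : WeaklyCompact K) (hbal : Balanced ℝ K) (hconv : Convex ℝ K)
    (hprop : pol K ≠ Set.univ) :
    (∀ φ : X →L[ℝ] ℝ, supportFn K φ < 1 →
      ∀ x : X, supportFnStar (pol K) 0 - φ 0 ≤ supportFnStar (pol K) x - φ x) ∧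
    (∀ φ : X →L[ℝ] ℝ, conjugate (supportFnStar (pol K)) φ =
      if φ ∈ pol K then (0 : EReal) else ⊤) ∧
    {φ : X →L[ℝ] ℝ | (subdiffStarE (conjugate (supportFnStar (pol K))) φ).Nonempty} ⊆ pol K ∧
    {φ : X →L[ℝ] ℝ | (subdiffStarE (conjugate (supportFnStar (pol K))) φ).Nonempty} ≠
      Set.univ :=
  supportFn_polar_attainsMin_and_domSubdiff_small_general K hprop

end
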